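/- In a sequence of independent fair coin flips, the probability that THH occurs before HHH is 7/8. -/

import Mathlib

/-!
THH comes before HHH unless the first three flips are all heads. THH occurs almost surely: by
the second Borel–Cantelli lemma, infinitely many of the disjoint, independent blocks of three
flips read THH. If the first HHH completes at a time later than 3, the flip just before it is a
tail, since a head would complete an earlier HHH. So THH has already completed one step earlier.
The probability is therefore `1 - 2⁻³ = 7/8`.
-/

open MeasureTheory ProbabilityTheory
open scoped ENNReal

/-- The pattern `P` occurs at time `n` (i.e. within the first `n` draws
`x 0, …, x (n-1)`, as the final block of `P.length` consecutive draws). -/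
def occursAt {α : Type*} (P : List α) (x : ℕ → α) (n : ℕ) : Prop :=
  P.length ≤ n ∧ ∀ i (h : i < P.length), x (n - P.length + i) = P.get ⟨i, h⟩

/-- The first time at which the pattern `P` occurs (`∞` if it never occurs). -/
noncomputable def hitTime {α : Type*} (P : List α) (x : ℕ → α) : ℝ≥0∞ :=
  sInf ((fun n : ℕ => (n : ℝ≥0∞)) '' {n | occursAt P x n})

/-- The fair-coin distribution on `Bool` (`true` = heads `H`, `false` = tails `T`). -/
noncomputable def fairCoin : Measure Bool := (PMF.bernoulli (1/2) (by norm_num)).toMeasure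

open Filter Function

section Patterns

variable {α : Type*} {P Q : List α} {x : ℕ → α} {n : ℕ}

lemma occursAt.length_le (h : occursAt P x n) : P.length ≤ n := h.1

lemma occursAt_triple_add_three_iff {a b c : α} :
    occursAt [a, b, c] x (n + 3) ↔ x n = a ∧ x (n + 1) = b ∧ x (n + 2) = c := by
  simp only [occursAt, List.length_cons, List.length_nil, Nat.add_sub_cancel,
    le_add_iff_nonneg_left, zero_le, true_and]
  refine ⟨fun h => ⟨h 0 (by simp), h 1 (by simp), h 2 (by simp)⟩, ?_⟩
  rintro ⟨h0, h1, h2⟩ i hi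
  interval_cases i <;> assumption

lemma hitTime_le_of_occursAt (h : occursAt P x n) : hitTime P x ≤ n :=
  sInf_le ⟨n, h, rfl⟩

lemma le_hitTime_of_forall_lt {m : ℕ} (h : ∀ n < m, ¬ occursAt P x n) :
    (m : ℝ≥0∞) ≤ hitTime P x :=
  le_sInf <| by
    rintro _ ⟨n, hn, rfl⟩
    exact Nat.cast_le.mpr (not_lt.mp fun hnm => h n hnm hn)

lemma hitTime_lt_hitTime_iff :
    hitTime P x < hitTime Q x ↔ ∃ n, occursAt P x n ∧ ∀ m ≤ n, ¬ occursAt Q x m := by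
  constructor
  · intro h
    obtain ⟨_, ⟨n, hn, rfl⟩, hlt⟩ := sInf_lt_iff.mp h
    exact ⟨n, hn, fun m hmn hm =>
      ((hitTime_le_of_occursAt hm).trans (Nat.cast_le.mpr hmn)).not_gt hlt⟩
  · rintro ⟨n, hP, hQ⟩
    calc hitTime P x ≤ n := hitTime_le_of_occursAt hP
      _ < (n + 1 : ℕ) := by exact_mod_cast n.lt_succ_self
      _ ≤ hitTime Q x := le_hitTime_of_forall_lt fun m hm => hQ m (Nat.le_of_lt_succ hm)

end Patterns

lemma hitTime_THH_lt_hitTime_HHH_iff {x : ℕ → Bool}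
    (hTHH : ∃ n, occursAt [false, true, true] x n) :
    hitTime [false, true, true] x < hitTime [true, true, true] x ↔
      ¬ (x 0 = true ∧ x 1 = true ∧ x 2 = true) := by
  classical
  rw [hitTime_lt_hitTime_iff]
  constructor
  · rintro ⟨n, hn, hHHH⟩ hHHH₀
    obtain ⟨k, rfl⟩ : ∃ k, n = k + 3 := Nat.exists_eq_add_of_le' hn.length_le
    exact hHHH 3 (by simp) (occursAt_triple_add_three_iff.mpr hHHH₀)
  · intro hHHH₀
    by_cases hHHH : ∃ m, occursAt [true, true, true] x m
    · obtain ⟨m, hm, hmin⟩ : ∃ m, occursAt [true, true, true] x m ∧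
          ∀ m' < m, ¬ occursAt [true, true, true] x m' :=
        ⟨Nat.find hHHH, Nat.find_spec hHHH, fun _ => Nat.find_min hHHH⟩
      obtain ⟨j, rfl⟩ : ∃ j, m = j + 3 := Nat.exists_eq_add_of_le' hm.length_le
      rcases j with _ | k
      · exact absurd (occursAt_triple_add_three_iff.mp hm) hHHH₀
      obtain ⟨h1, h2, h3⟩ : x (k + 1) = true ∧ x (k + 2) = true ∧ x (k + 3) = true := by
        simpa [Nat.add_assoc] using occursAt_triple_add_three_iff.mp hm
      have h0 : x k = false := by
        by_contra h0
        exact hmin (k + 3) (by omega)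
          (occursAt_triple_add_three_iff.mpr ⟨by simpa using h0, h1, h2⟩)
      exact ⟨k + 3, occursAt_triple_add_three_iff.mpr ⟨h0, h1, h2⟩,
        fun m' hm' => hmin m' (by omega)⟩
    · simp only [not_exists] at hHHH
      obtain ⟨n, hn⟩ := hTHH
      exact ⟨n, hn, fun m _ => hHHH m⟩

set_option linter.deprecated false in
lemma fairCoin_singleton (b : Bool) : fairCoin {b} = 2⁻¹ := by
  cases b <;> simp [fairCoin, PMF.bernoulli_apply]

lemma pairwise_disjoint_Ico_mul_add_self (L : ℕ) :
    Pairwise (Disjoint on fun k => Finset.Ico (L * k) (L * k + L)) := by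
  intro k l hkl
  wlog h : k < l generalizing k l
  · exact (this hkl.symm (by omega)).symm
  refine Finset.disjoint_left.mpr fun i hik hil => ?_
  have : L * (k + 1) ≤ L * l := Nat.mul_le_mul_left L h
  simp only [Finset.mem_Ico] at hik hil
  rw [mul_add, mul_one] at this
  omega

section FairCoins

variable {Ω : Type*} [MeasurableSpace Ω] {μ : Measure Ω} {X : ℕ → Ω → Bool}

lemma measure_preimage_singleton_eq_inv_two {Y : Ω → Bool} (hY : Measurable Y)
    (hfair : μ.map Y = fairCoin) (b : Bool) : μ (Y ⁻¹' {b}) = 2⁻¹ := by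
  rw [← Measure.map_apply hY (measurableSet_singleton b), hfair, fairCoin_singleton]

lemma measure_biInter_preimage_singleton_eq_inv_two_pow (hmeas : ∀ n, Measurable (X n))
    (hindep : iIndepFun X μ) (hfair : ∀ n, μ.map (X n) = fairCoin)
    (s : Finset ℕ) (v : ℕ → Bool) :
    μ (⋂ i ∈ s, X i ⁻¹' {v i}) = 2⁻¹ ^ s.card := by
  rw [hindep.measure_inter_preimage_eq_mul s fun i _ => measurableSet_singleton (v i),
    Finset.prod_congr rfl fun i _ =>
      measure_preimage_singleton_eq_inv_two (hmeas i) (hfair i) (v i),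
    Finset.prod_const]

lemma ae_exists_occursAt [IsProbabilityMeasure μ] (hmeas : ∀ n, Measurable (X n))
    (hindep : iIndepFun X μ) (hfair : ∀ n, μ.map (X n) = fairCoin) (P : List Bool) :
    ∀ᵐ ω ∂μ, ∃ n, occursAt P (fun i => X i ω) n := by
  let B : ℕ → Finset ℕ := fun k => Finset.Ico (P.length * k) (P.length * k + P.length)
  -- `P.getD (i % P.length) false` is the letter of `P` that position `i` of a block must match
  let C : ℕ → Set Ω := fun k => ⋂ i ∈ B k, X i ⁻¹' {P.getD (i % P.length) false}
  have hC_meas (k : ℕ) : MeasurableSet (C k) :=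
    Finset.measurableSet_biInter _ fun i _ => hmeas i (measurableSet_singleton _)
  have hC (k : ℕ) : μ (C k) = 2⁻¹ ^ P.length := by
    simp only [C, measure_biInter_preimage_singleton_eq_inv_two_pow hmeas hindep hfair, B,
      Nat.card_Ico, Nat.add_sub_cancel_left]
  have hC_indep : iIndepSet C μ := by
    classical
    refine (iIndepSet_iff_meas_biInter hC_meas).2 fun s => ?_
    rw [← Finset.set_biInter_biUnion,
      measure_biInter_preimage_singleton_eq_inv_two_pow hmeas hindep hfair,
      Finset.card_biUnion ((pairwise_disjoint_Ico_mul_add_self _).set_pairwise _),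
      ← Finset.prod_pow_eq_pow_sum]
    exact Finset.prod_congr rfl fun k _ => by simp [hC]
  have hC_occurs (k : ℕ) (ω : Ω) (hω : ω ∈ C k) :
      occursAt P (fun i => X i ω) (P.length * k + P.length) := by
    refine ⟨Nat.le_add_left _ _, fun j hj => ?_⟩
    have := Set.mem_iInter₂.mp hω (P.length * k + j) (by simp [B, hj])
    simpa [Nat.mul_add_mod, Nat.mod_eq_of_lt hj, hj] using this
  have hlimsup : μ (limsup C atTop) = 1 :=
    measure_limsup_eq_one hC_meas hC_indep (by simp [hC])
  filter_upwards [(ae_mem_iff_measure_eq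
    (MeasurableSet.measurableSet_limsup hC_meas).nullMeasurableSet).2
      (hlimsup.trans measure_univ.symm)] with ω hω
  obtain ⟨k, hk⟩ := (mem_limsup_iff_frequently_mem.1 hω).exists
  exact ⟨_, hC_occurs k ω hk⟩

end FairCoins

/-- In i.i.d. fair coin flips, P(THH occurs before HHH) = 7/8. -/
theorem stmt_1 {Ω : Type*} [MeasurableSpace Ω] (μ : Measure Ω) [IsProbabilityMeasure μ]
    (X : ℕ → Ω → Bool) (hmeas : ∀ n, Measurable (X n))
    (hindep : iIndepFun X μ)
    (hfair : ∀ n, μ.map (X n) = fairCoin) :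
    μ {ω | hitTime [false, true, true] (fun n => X n ω)
         < hitTime [true, true, true] (fun n => X n ω)} = 7/8 := by
  set HHH₀ := ⋂ i ∈ ({0, 1, 2} : Finset ℕ), X i ⁻¹' {true}
  have hHHH₀_meas : MeasurableSet HHH₀ :=
    Finset.measurableSet_biInter _ fun i _ => hmeas i (measurableSet_singleton _)
  have hHHH₀ : μ HHH₀ = 2⁻¹ ^ 3 :=
    measure_biInter_preimage_singleton_eq_inv_two_pow hmeas hindep hfair _ _
  have hTHH_first : {ω | hitTime [false, true, true] (fun n => X n ω)
      < hitTime [true, true, true] (fun n => X n ω)} =ᵐ[μ] (HHH₀ᶜ : Set Ω) := by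
    refine eventuallyEq_set.2 ?_
    filter_upwards [ae_exists_occursAt hmeas hindep hfair [false, true, true]] with ω hω
    simp [HHH₀, hitTime_THH_lt_hitTime_HHH_iff hω]
  rw [measure_congr hTHH_first, prob_compl_eq_one_sub hHHH₀_meas, hHHH₀,
    ← ENNReal.toReal_eq_toReal_iff' (by finiteness) (by finiteness),
    ENNReal.toReal_sub_of_le (pow_le_one₀ (by simp) (by norm_num)) (by simp)]
  norm_num
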